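/- Fix an integer r ≥ 1 and let a₀, a₁, …, a_r : ℤ → ℝ be the univariate B-spline UEP filters. Then for every k ∈ ℤ, Σ_{α=0}^r Σ_{m∈ℤ} a_α[m]·a_α[m+k] equals 1 if k = 0 and equals 0 otherwise. (Equivalently, the Fourier series â_α(ξ) = Σ_k a_α[k]e^{−ikξ} satisfy Σ_{α=0}^r |â_α(ξ)|² = 1 for all ξ ∈ ℝ, the first condition of the unitary extension principle.) -/

import Mathlib

noncomputable section

namespace WFrame

/-- convolution of finitely supported sequences on ℤ -/
def fconv (f g : ℤ →₀ ℝ) : ℤ →₀ ℝ :=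
  f.sum fun a c => g.sum fun b d => Finsupp.single (a + b) (c * d)

/-- convolution power; `fpow f 0` is the Dirac delta at 0 -/
def fpow (f : ℤ →₀ ℝ) : ℕ → (ℤ →₀ ℝ)
  | 0 => Finsupp.single 0 1
  | n + 1 => fconv (fpow f n) f

/-- the 1st order average filter p = δ₀ + δ₁ -/
def pF : ℤ →₀ ℝ := Finsupp.single 0 1 + Finsupp.single 1 1

/-- the 1st order difference filter q = δ₀ − δ₁ -/
def qF : ℤ →₀ ℝ := Finsupp.single 0 1 - Finsupp.single 1 1

/-- j_r = 1 if r odd, 0 if r even -/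
def jr (r : ℕ) : ℤ := if r % 2 = 1 then 1 else 0

/-- univariate B-spline UEP filter `a_α`; `aF r α k = a_α[k]`.
`Finsupp.mapDomain (· + jr r)` shifts the sequence: the value of the result at `k` is
the value of the original sequence at `k - jr r`. -/
def aF (r α : ℕ) : ℤ →₀ ℝ :=
  if α = 0 then ((2:ℝ) ^ (-(r:ℤ))) • Finsupp.mapDomain (· + jr r) (fpow pF r)
  else ((-1:ℝ) ^ (α + 1) * (2:ℝ) ^ (-(r:ℤ)) * Real.sqrt (r.choose α)) •
    Finsupp.mapDomain (· + jr r) (fconv (fpow pF (r - α)) (fpow qF α))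

end WFrame

/-!
In the group algebra `ℝ[ℤ]` convolution is multiplication, and `∑ₘ a[m] a[m + k]` is the
`k`-th coefficient of the autocorrelation `ã * a`, where `ã` is `a` reflected through `0`.
Autocorrelation is multiplicative, unaffected by the shift by `j_r`, and scales by `c²` under
`a ↦ c • a`. Hence `∑_α ã_α a_α = 4⁻ʳ ∑_α binom(r, α) (q̃ q)^α (p̃ p)^(r - α) = 4⁻ʳ (q̃ q + p̃ p)^r`,
and `q̃ q + p̃ p = (2 - t⁻¹ - t) + (2 + t⁻¹ + t) = 4` with `t = δ₁`.
-/

namespace WFrame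

open AddMonoidAlgebra

section Autocorrelation

variable {R G : Type*} [CommSemiring R] [AddCommGroup G]

def reflect : R[G] ≃ₐ[R] R[G] := domCongr R R (AddEquiv.neg G)

lemma reflect_single (g : G) (c : R) : reflect (single g c) = single (-g) c :=
  domCongr_single ..

lemma coeff_reflect_mul (x y : R[G]) (k : G) :
    (reflect x * y).coeff k = ∑ m ∈ x.coeff.support, x.coeff m * y.coeff (m + k) := by
  rw [coeff_mul_apply_left, reflect, Finsupp.sum]
  simp [add_comm]

def autocorr (x : R[G]) : R[G] := reflect x * x

lemma autocorr_mul (x y : R[G]) : autocorr (x * y) = autocorr x * autocorr y := by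
  simp only [autocorr, map_mul]; ring

lemma autocorr_pow (x : R[G]) (n : ℕ) : autocorr (x ^ n) = autocorr x ^ n := by
  simp only [autocorr, map_pow, mul_pow]

lemma autocorr_smul (c : R) (x : R[G]) : autocorr (c • x) = (c * c) • autocorr x := by
  simp only [autocorr, map_smul, smul_mul_smul_comm]

lemma autocorr_single_one (g : G) : autocorr (single g (1 : R)) = 1 := by
  rw [autocorr, reflect_single, single_mul_single, neg_add_cancel, one_mul, one_def]

end Autocorrelation

lemma ofCoeff_fconv (f g : ℤ →₀ ℝ) : ofCoeff (fconv f g) = ofCoeff f * ofCoeff g := by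
  simp only [fconv, mul_def, ofCoeff_finsuppSum, ofCoeff_single]

lemma ofCoeff_fpow (f : ℤ →₀ ℝ) (n : ℕ) : ofCoeff (fpow f n) = ofCoeff f ^ n := by
  induction n with
  | zero => rfl
  | succ n ih => rw [fpow, ofCoeff_fconv, ih, pow_succ]

lemma ofCoeff_mapDomain_add_right (f : ℤ →₀ ℝ) (j : ℤ) :
    ofCoeff (Finsupp.mapDomain (· + j) f) = ofCoeff f * single j 1 := by
  ext k
  obtain ⟨m, rfl⟩ : ∃ m, k = m + j := ⟨k - j, by ring⟩
  rw [coeff_mul_single_apply, add_neg_cancel_right, mul_one, coeff_ofCoeff, coeff_ofCoeff,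
    Finsupp.mapDomain_apply (add_left_injective j)]

lemma autocorr_aF (r α : ℕ) :
    autocorr (ofCoeff (aF r α)) = ((4 ^ r)⁻¹ * r.choose α : ℝ) •
      (autocorr (ofCoeff qF) ^ α * autocorr (ofCoeff pF) ^ (r - α)) := by
  have hscale : (2 : ℝ) ^ (-(r : ℤ)) * 2 ^ (-(r : ℤ)) = (4 ^ r)⁻¹ := by
    rw [zpow_neg, zpow_natCast, ← mul_inv, ← mul_pow]
    norm_num
  rcases eq_or_ne α 0 with rfl | hα
  · simp only [aF, if_true, ofCoeff_smul, ofCoeff_mapDomain_add_right, ofCoeff_fpow,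
      autocorr_smul, autocorr_mul, autocorr_single_one, autocorr_pow, hscale, Nat.choose_zero_right,
      Nat.sub_zero, Nat.cast_one, pow_zero, mul_one, one_mul]
  · have hsign : ((-1 : ℝ) ^ (α + 1)) * (-1) ^ (α + 1) = 1 := by
      rw [← mul_pow, neg_one_mul, neg_neg, one_pow]
    have hsqrt : √(r.choose α : ℝ) * √(r.choose α) = r.choose α :=
      Real.mul_self_sqrt (Nat.cast_nonneg _)
    simp only [aF, if_neg hα, ofCoeff_smul, ofCoeff_mapDomain_add_right, ofCoeff_fconv,
      ofCoeff_fpow, autocorr_smul, autocorr_mul, autocorr_single_one, mul_one, autocorr_pow]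
    congr 1
    · linear_combination (2 : ℝ) ^ (-(r : ℤ)) * 2 ^ (-(r : ℤ)) *
        (√(r.choose α : ℝ) * √(r.choose α) * hsign + hsqrt) + (r.choose α : ℝ) * hscale
    · exact mul_comm _ _

lemma autocorr_qF_add_autocorr_pF : autocorr (ofCoeff qF) + autocorr (ofCoeff pF) = 4 := by
  have hshift : reflect (single (1 : ℤ) (1 : ℝ)) * single 1 1 = 1 := autocorr_single_one 1
  simp only [autocorr, pF, qF, ofCoeff_add, ofCoeff_sub, ofCoeff_single, map_add, map_sub,
    ← one_def, map_one]
  linear_combination (2 : ℝ[ℤ]) * hshift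

lemma sum_autocorr_aF (r : ℕ) : ∑ α ∈ Finset.range (r + 1), autocorr (ofCoeff (aF r α)) = 1 := by
  calc ∑ α ∈ Finset.range (r + 1), autocorr (ofCoeff (aF r α))
      = ((4 : ℝ) ^ r)⁻¹ • ∑ α ∈ Finset.range (r + 1), (r.choose α : ℝ) •
          (autocorr (ofCoeff qF) ^ α * autocorr (ofCoeff pF) ^ (r - α)) := by
        simp_rw [autocorr_aF, mul_smul, Finset.smul_sum]
    _ = ((4 : ℝ) ^ r)⁻¹ • (autocorr (ofCoeff qF) + autocorr (ofCoeff pF)) ^ r := by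
        rw [add_pow]
        congr 1
        refine Finset.sum_congr rfl fun α _ => ?_
        rw [Nat.cast_smul_eq_nsmul, nsmul_eq_mul, mul_comm]
    _ = 1 := by
        rw [autocorr_qF_add_autocorr_pF, ← map_ofNat (algebraMap ℝ ℝ[ℤ]) 4, ← map_pow,
          Algebra.smul_def, ← map_mul, inv_mul_cancel₀ (by positivity), map_one]

theorem stmt15_general (r : ℕ) (k : ℤ) :
    (∑ α ∈ Finset.range (r + 1), ∑ m ∈ (aF r α).support, aF r α m * aF r α (m + k)) =
      if k = 0 then 1 else 0 := by
  have hcorr (α : ℕ) : ∑ m ∈ (aF r α).support, aF r α m * aF r α (m + k) =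
      (autocorr (ofCoeff (aF r α))).coeff k :=
    (coeff_reflect_mul _ _ k).symm
  simp_rw [hcorr, ← Finset.sum_apply', ← coeff_sum, sum_autocorr_aF, one_def, coeff_single,
    Finsupp.single_apply, eq_comm]

/-- first UEP condition for the univariate B-spline filters:
Σ_{α=0}^r Σ_{m∈ℤ} a_α[m]·a_α[m+k] = δ_{k,0}. -/
theorem stmt15 (r : ℕ) (hr : 1 ≤ r) (k : ℤ) :
    (∑ α ∈ Finset.range (r + 1), ∑ m ∈ (aF r α).support, aF r α m * aF r α (m + k)) =
      if k = 0 then 1 else 0 :=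
  stmt15_general r k

end WFrame
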